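/- For every positive integer N, the image of the element (1−ξ_N)(1−η_N) in the quotient ring ℤ[Δ_N]/I_N is a non-zero-divisor: if f ∈ ℤ[Δ_N] satisfies f·(1−ξ_N)(1−η_N) ∈ I_N, then f ∈ I_N. (Claim used in the proof of Theorem 2.5(iii) of the paper.) -/

import Mathlib

/-!
Identify an element of `ℤ[Δ_N]` with its coefficient function `F : ℤ/N × ℤ/N → ℤ`. Then `I_N`
consists exactly of the functions `F i j = P i + Q j`, and multiplying by `(1 - ξ)(1 - η)` takes
the mixed second difference of `F`. If that difference equals `A i + B j`, then summing it over
`i` and over `j`, where it telescopes to `0`, forces `A i + B j = 0`; and a function on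
`ℤ/N × ℤ/N` whose mixed second difference vanishes is `F i 0 + F 0 j - F 0 0`.
-/

/-- `Δ_N`: the multiplicative group `(ℤ/Nℤ) × (ℤ/Nℤ)`. -/
abbrev adelicHGF.Delta (N : ℕ) : Type := Multiplicative (ZMod N × ZMod N)

namespace adelicHGF

/-- The generator `ξ_N = (1,0)` of `Δ_N`. -/
def xi (N : ℕ) : Delta N := Multiplicative.ofAdd ((1 : ZMod N), (0 : ZMod N))

/-- The generator `η_N = (0,1)` of `Δ_N`. -/
def eta (N : ℕ) : Delta N := Multiplicative.ofAdd ((0 : ZMod N), (1 : ZMod N))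

/-- The element `∑_{i ∈ ℤ/Nℤ} ξ_N^i` of the group ring `ℤ[Δ_N]`. -/
noncomputable def sumXi (N : ℕ) [NeZero N] : MonoidAlgebra ℤ (Delta N) :=
  ∑ i : ZMod N, MonoidAlgebra.of ℤ (Delta N) (Multiplicative.ofAdd (i, (0 : ZMod N)))

/-- The element `∑_{j ∈ ℤ/Nℤ} η_N^j` of the group ring `ℤ[Δ_N]`. -/
noncomputable def sumEta (N : ℕ) [NeZero N] : MonoidAlgebra ℤ (Delta N) :=
  ∑ j : ZMod N, MonoidAlgebra.of ℤ (Delta N) (Multiplicative.ofAdd ((0 : ZMod N), j))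

/-- The ideal `I_N ⊆ ℤ[Δ_N]` generated by `∑_i ξ_N^i` and `∑_j η_N^j`. -/
noncomputable def IN (N : ℕ) [NeZero N] : Ideal (MonoidAlgebra ℤ (Delta N)) :=
  Ideal.span {sumXi N, sumEta N}

end adelicHGF

open Function Finset

theorem ZMod.eq_apply_zero_of_periodic_one {α : Type*} {N : ℕ} {u : ZMod N → α}
    (hu : Periodic u 1) (i : ZMod N) : u i = u 0 := by
  simpa using hu.int_mul i.cast 0

section Combinatorics

variable {M : Type*} [AddCommGroup M]

theorem Fintype.sum_sub_comp_add_eq_zero {G : Type*} [AddGroup G] [Fintype G] (u : G → M)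
    (g : G) : ∑ x, (u (x + g) - u x) = 0 := by
  rw [Finset.sum_sub_distrib, sub_eq_zero]
  exact Fintype.sum_equiv (Equiv.addRight g) _ _ fun _ => rfl

theorem add_eq_zero_of_sum_add_eq_zero [IsAddTorsionFree M] {ι κ : Type*} [Fintype ι]
    [Fintype κ] {A : ι → M} {B : κ → M} (hcol : ∀ j, ∑ i, (A i + B j) = 0)
    (hrow : ∀ i, ∑ j, (A i + B j) = 0) (i : ι) (j : κ) : A i + B j = 0 := by
  have hcol' : ∀ j, ∑ i, A i + Fintype.card ι • B j = 0 := by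
    simpa [Finset.sum_add_distrib] using hcol
  have hrow' : ∀ i, Fintype.card κ • A i + ∑ j, B j = 0 := by
    simpa [Finset.sum_add_distrib] using hrow
  have htotal : Fintype.card κ • ∑ i, A i + Fintype.card ι • ∑ j, B j = 0 := by
    simpa [Finset.sum_add_distrib, Finset.smul_sum] using
      Finset.sum_eq_zero (s := univ) fun j _ => hcol' j
  have hcard : Fintype.card ι * Fintype.card κ ≠ 0 :=
    mul_ne_zero (Fintype.card_pos_iff.2 ⟨i⟩).ne' (Fintype.card_pos_iff.2 ⟨j⟩).ne'
  rw [← nsmul_eq_zero_iff_right hcard]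
  calc (Fintype.card ι * Fintype.card κ) • (A i + B j)
      = Fintype.card ι • (Fintype.card κ • A i + ∑ j, B j)
        + Fintype.card κ • (∑ i, A i + Fintype.card ι • B j)
        - (Fintype.card κ • ∑ i, A i + Fintype.card ι • ∑ j, B j) := by
          simp only [smul_add, mul_nsmul', smul_comm (Fintype.card κ) (Fintype.card ι)]; abel
    _ = 0 := by rw [hrow', hcol', htotal]; simp

theorem ZMod.eq_add_sub_of_forall_sub_sub_add_eq_zero {N : ℕ} {F : ZMod N → ZMod N → M}
    (hF : ∀ i j, F (i + 1) (j + 1) - F i (j + 1) - F (i + 1) j + F i j = 0) (i j : ZMod N) :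
    F i j = F i 0 + F 0 j - F 0 0 := by
  have hstep : ∀ i j, F i (j + 1) - F i j = F 0 (j + 1) - F 0 j := fun i j =>
    ZMod.eq_apply_zero_of_periodic_one (u := fun i => F i (j + 1) - F i j)
      (fun i' => by dsimp only; rw [← sub_eq_zero, ← hF i' j]; abel) i
  have hdiff := ZMod.eq_apply_zero_of_periodic_one (u := fun j => F i j - F 0 j)
    (fun j => by rw [sub_eq_sub_iff_sub_eq_sub, hstep]) j
  rw [add_sub_right_comm, ← hdiff, sub_add_cancel]

theorem ZMod.exists_add_of_forall_sub_sub_add_eq_add {N : ℕ} [NeZero N] [IsAddTorsionFree M]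
    {F : ZMod N → ZMod N → M} {A B : ZMod N → M}
    (hF : ∀ i j, F (i + 1) (j + 1) - F i (j + 1) - F (i + 1) j + F i j = A i + B j) :
    ∃ P Q : ZMod N → M, ∀ i j, F i j = P i + Q j := by
  have hzero : ∀ i j, A i + B j = 0 := by
    refine add_eq_zero_of_sum_add_eq_zero (fun j => ?_) (fun i => ?_)
    · simp_rw [← hF]
      convert Fintype.sum_sub_comp_add_eq_zero (fun i => F i (j + 1) - F i j) 1 using 2
      abel
    · simp_rw [← hF]
      convert Fintype.sum_sub_comp_add_eq_zero (fun j => F (i + 1) j - F i j) 1 using 2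
      abel
  refine ⟨fun i => F i 0 - F 0 0, fun j => F 0 j, fun i j => ?_⟩
  rw [sub_add_eq_add_sub]
  exact ZMod.eq_add_sub_of_forall_sub_sub_add_eq_zero (fun i j => (hF i j).trans (hzero i j)) i j

end Combinatorics

theorem MonoidAlgebra.coeff_mul_sum_of {R G ι : Type*} [Semiring R] [Group G]
    (x : MonoidAlgebra R G) (s : Finset ι) (g : ι → G) (t : G) :
    (x * ∑ k ∈ s, of R G (g k)).coeff t = ∑ k ∈ s, x.coeff (t * (g k)⁻¹) := by
  simp [Finset.mul_sum, MonoidAlgebra.coeff_sum]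

namespace adelicHGF

variable {N : ℕ}

theorem coeff_mul_sumXi [NeZero N] (a : MonoidAlgebra ℤ (Delta N)) (i j : ZMod N) :
    (a * sumXi N).coeff (.ofAdd (i, j)) = ∑ k, a.coeff (.ofAdd (k, j)) := by
  rw [sumXi, MonoidAlgebra.coeff_mul_sum_of]
  exact Fintype.sum_equiv (Equiv.subLeft i) _ _ fun k => by
    simp [← ofAdd_neg, ← ofAdd_add, sub_eq_add_neg]

theorem coeff_mul_sumEta [NeZero N] (b : MonoidAlgebra ℤ (Delta N)) (i j : ZMod N) :
    (b * sumEta N).coeff (.ofAdd (i, j)) = ∑ k, b.coeff (.ofAdd (i, k)) := by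
  rw [sumEta, MonoidAlgebra.coeff_mul_sum_of]
  exact Fintype.sum_equiv (Equiv.subLeft j) _ _ fun k => by
    simp [← ofAdd_neg, ← ofAdd_add, sub_eq_add_neg]

theorem mem_IN_iff [NeZero N] {f : MonoidAlgebra ℤ (Delta N)} :
    f ∈ IN N ↔ ∃ P Q : ZMod N → ℤ, ∀ i j, f.coeff (.ofAdd (i, j)) = P i + Q j := by
  rw [IN, Ideal.mem_span_pair]
  constructor
  · rintro ⟨a, b, rfl⟩
    refine ⟨fun i => ∑ k, b.coeff (.ofAdd (i, k)), fun j => ∑ k, a.coeff (.ofAdd (k, j)),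
      fun i j => ?_⟩
    rw [MonoidAlgebra.coeff_add, Finsupp.add_apply, coeff_mul_sumXi, coeff_mul_sumEta, add_comm]
  · rintro ⟨P, Q, hPQ⟩
    let ofFun (φ : ZMod N × ZMod N → ℤ) : MonoidAlgebra ℤ (Delta N) :=
      .ofCoeff (Finsupp.equivFunOnFinite.symm fun t => φ t.toAdd)
    refine ⟨ofFun fun t => if t.1 = 0 then Q t.2 else 0,
      ofFun fun t => if t.2 = 0 then P t.1 else 0, ?_⟩
    ext t
    obtain ⟨⟨i, j⟩, rfl⟩ := Multiplicative.ofAdd.surjective t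
    rw [MonoidAlgebra.coeff_add, Finsupp.add_apply, coeff_mul_sumXi, coeff_mul_sumEta, hPQ]
    simp only [ofFun, Finsupp.equivFunOnFinite_symm_apply_apply, toAdd_ofAdd, sum_ite_eq',
      mem_univ, ↓reduceIte]
    exact add_comm _ _

theorem coeff_mul_one_sub_xi_mul_one_sub_eta (f : MonoidAlgebra ℤ (Delta N)) (i j : ZMod N) :
    (f * ((1 - MonoidAlgebra.of ℤ (Delta N) (xi N)) *
        (1 - MonoidAlgebra.of ℤ (Delta N) (eta N)))).coeff (.ofAdd (i + 1, j + 1)) =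
      f.coeff (.ofAdd (i + 1, j + 1)) - f.coeff (.ofAdd (i, j + 1)) - f.coeff (.ofAdd (i + 1, j))
        + f.coeff (.ofAdd (i, j)) := by
  simp only [xi, eta, MonoidAlgebra.of_apply, mul_sub, mul_one, sub_mul, one_mul,
    MonoidAlgebra.single_mul_single, ← ofAdd_add, Prod.mk_add_mk, add_zero, zero_add,
    MonoidAlgebra.coeff_sub, Finsupp.coe_sub, Pi.sub_apply, MonoidAlgebra.coeff_mul_single_apply,
    ← ofAdd_neg, Prod.neg_mk, neg_zero, add_neg_cancel_right]
  abel

end adelicHGF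

open adelicHGF in
/-- **Claim used in the proof of Theorem 2.5(iii)**: for every positive integer `N`, the image
of `(1 - ξ_N)(1 - η_N)` in `ℤ[Δ_N]/I_N` is a non-zero-divisor: if
`f · (1 - ξ_N)(1 - η_N) ∈ I_N`, then `f ∈ I_N`. -/
theorem adelicHGF.one_sub_xi_mul_one_sub_eta_nonZeroDivisor (N : ℕ) [NeZero N]
    (f : MonoidAlgebra ℤ (Delta N))
    (h : f * ((1 - MonoidAlgebra.of ℤ (Delta N) (xi N)) *
        (1 - MonoidAlgebra.of ℤ (Delta N) (eta N))) ∈ IN N) :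
    f ∈ IN N := by
  obtain ⟨P, Q, hPQ⟩ := mem_IN_iff.1 h
  refine mem_IN_iff.2 (ZMod.exists_add_of_forall_sub_sub_add_eq_add
    (A := fun i => P (i + 1)) (B := fun j => Q (j + 1)) fun i j => ?_)
  rw [← coeff_mul_one_sub_xi_mul_one_sub_eta, hPQ]
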